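/- With α ∈ (0,1] fixed, if 0 < μ_{t+1} < μ_t, π_t globally maximizes P(·, μ_t), and π_{t+1} globally maximizes P(·, μ_{t+1}), then F_C⁺(π_{t+1}) ≤ F_C⁺(π_t); in particular if constraints are violated at both policies, F_C(π_{t+1}) ≤ F_C(π_t). -/
import Mathlib


noncomputable def Phi (α x : ℝ) : ℝ := α * x + (1 - α) * x ^ 2

noncomputable def Pen {S : Type*} (Fr Fc : S → ℝ) (α μ : ℝ) (p : S) : ℝ :=
  Fr p - (1 / μ) * Phi α (max (Fc p) 0)

theorem stmt3 {S : Type*} [Nonempty S] (Fr Fc : S → ℝ) (α : ℝ)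
    (hα0 : 0 < α) (hα1 : α ≤ 1) (μt μt1 : ℝ) (hμ1 : 0 < μt1) (hμ : μt1 < μt)
    (pt pt1 : S)
    (hmaxt : ∀ p, Pen Fr Fc α μt p ≤ Pen Fr Fc α μt pt)
    (hmaxt1 : ∀ p, Pen Fr Fc α μt1 p ≤ Pen Fr Fc α μt1 pt1) :
    max (Fc pt1) 0 ≤ max (Fc pt) 0 ∧
      (0 < Fc pt → 0 < Fc pt1 → Fc pt1 ≤ Fc pt) := by
  have hμt : 0 < μt := hμ1.trans hμ
  set x0 := max (Fc pt) 0 with hx0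
  set x1 := max (Fc pt1) 0 with hx1
  have h1 := hmaxt pt1
  have h2 := hmaxt1 pt
  simp only [Pen] at h1 h2
  -- Φ(x1) ≤ Φ(x0)
  have hPhi : Phi α x1 ≤ Phi α x0 := by
    have hinv : 1 / μt < 1 / μt1 := by
      apply one_div_lt_one_div_of_lt hμ1 hμ
    nlinarith [h1, h2]
  have hx0nn : (0:ℝ) ≤ x0 := le_max_right _ _
  have hx1nn : (0:ℝ) ≤ x1 := le_max_right _ _
  have hmain : x1 ≤ x0 := by
    by_contra h
    push_neg at h
    have : Phi α x0 < Phi α x1 := by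
      simp only [Phi]
      nlinarith [mul_pos hα0 (sub_pos.2 h), mul_nonneg (mul_nonneg (sub_nonneg.2 hα1) (add_nonneg hx1nn hx0nn)) (sub_pos.2 h).le]
    linarith
  refine ⟨hmain, fun hpt hpt1 => ?_⟩
  have e0 : x0 = Fc pt := max_eq_left hpt.le
  have e1 : x1 = Fc pt1 := max_eq_left hpt1.le
  rw [← e0, ← e1]; exact hmain
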